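/- Any symmetric product u = vₙ ⋯ v₁ v₀ v₁ ⋯ vₙ of real 2×2 symplectic equidiagonal matrices v₀, v₁, …, vₙ is symplectic and equidiagonal. -/
import Mathlib


/-- Any symmetric product `u = vₙ ⋯ v₁ v₀ v₁ ⋯ vₙ` of real 2×2 symplectic
equidiagonal matrices is symplectic and equidiagonal.  The symmetric products
are described by the recursion `S 0 = v 0`, `S (k+1) = v (k+1) * S k * v (k+1)`. -/
theorem symmetric_product_chain_symplectic_equidiagonal
    (n : ℕ) (v : ℕ → Matrix (Fin 2) (Fin 2) ℝ)
    (hdet : ∀ k, (v k).det = 1) (heq : ∀ k, v k 0 0 = v k 1 1)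
    (S : ℕ → Matrix (Fin 2) (Fin 2) ℝ)
    (hS0 : S 0 = v 0)
    (hSsucc : ∀ k, S (k + 1) = v (k + 1) * S k * v (k + 1)) :
    (S n).det = 1 ∧ S n 0 0 = S n 1 1 := by
  induction n with
  | zero => rw [hS0]; exact ⟨hdet 0, heq 0⟩
  | succ k ih =>
    obtain ⟨ihd, ihe⟩ := ih
    constructor
    · rw [hSsucc, Matrix.det_mul, Matrix.det_mul, ihd, hdet]
      ring
    · rw [hSsucc]
      simp only [Matrix.mul_apply, Fin.sum_univ_two]
      rw [heq (k + 1), ihe]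
      ring
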